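/- Let X be a closed subspace of a Banach space Y such that X is a super-ideal in Y. If Y has the diameter 2 property (every non-empty relatively weakly open subset of the closed unit ball B_Y has diameter 2), then X has the diameter 2 property. -/

import Mathlib

universe u v

open Metric Set

section Defs

variable {Y : Type*} [NormedAddCommGroup Y] [NormedSpace ℝ Y]

/-- `X` is an ideal in `Y`. -/
def IsIdeal (X : Subspace ℝ Y) : Prop :=
  ∀ ε : ℝ, 0 < ε → ∀ E : Subspace ℝ Y, FiniteDimensional ℝ E →
    ∃ T : E →ₗ[ℝ] X,
      (∀ e : E, (e : Y) ∈ X → ((T e : X) : Y) = (e : Y)) ∧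
      (∀ e : E, ‖T e‖ ≤ (1 + ε) * ‖e‖)

/-- `X` is a super-ideal in `Y`. -/
def IsSuperIdeal (X : Subspace ℝ Y) : Prop :=
  ∀ ε : ℝ, 0 < ε → ∀ E : Subspace ℝ Y, FiniteDimensional ℝ E →
    ∃ T : E →ₗ[ℝ] X,
      (∀ e : E, (e : Y) ∈ X → ((T e : X) : Y) = (e : Y)) ∧
      (∀ e : E, (1 + ε)⁻¹ * ‖e‖ ≤ ‖T e‖ ∧ ‖T e‖ ≤ (1 + ε) * ‖e‖)

/-- `X` is a super u-ideal in `Y`. -/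
def IsSuperUIdeal (X : Subspace ℝ Y) : Prop :=
  ∀ ε : ℝ, 0 < ε → ∀ E : Subspace ℝ Y, FiniteDimensional ℝ E →
    ∃ T : E →ₗ[ℝ] X,
      (∀ e : E, (e : Y) ∈ X → ((T e : X) : Y) = (e : Y)) ∧
      (∀ e : E, (1 + ε)⁻¹ * ‖e‖ ≤ ‖T e‖ ∧ ‖T e‖ ≤ (1 + ε) * ‖e‖) ∧
      (∀ e : E, ‖(e : Y) - (2 : ℝ) • ((T e : X) : Y)‖ ≤ (1 + ε) * ‖e‖)

/-- `φ : X* → Y*` is a Hahn-Banach extension operator. -/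
def IsHahnBanachExtensionOperator (X : Subspace ℝ Y)
    (φ : (X →L[ℝ] ℝ) →L[ℝ] (Y →L[ℝ] ℝ)) : Prop :=
  ∀ f : X →L[ℝ] ℝ, (∀ x : X, φ f (x : Y) = f x) ∧ ‖φ f‖ = ‖f‖

/-- A set of functionals `V ⊆ Y*` is 1-norming for `Y`. -/
def IsOneNorming (V : Set (Y →L[ℝ] ℝ)) : Prop :=
  ∀ y : Y, ‖y‖ = sSup {r : ℝ | ∃ v ∈ V, ‖v‖ ≤ 1 ∧ r = |v y|}

end Defs

section Props

variable (Z : Type*) [NormedAddCommGroup Z] [NormedSpace ℝ Z]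

/-- A slice of the closed unit ball of `Z`. -/
def IsSlice (S : Set Z) : Prop :=
  ∃ (f : Z →L[ℝ] ℝ) (ε : ℝ), ‖f‖ = 1 ∧ 0 < ε ∧
    S = {z | z ∈ closedBall (0 : Z) 1 ∧ 1 - ε < f z}

/-- The local diameter 2 property. -/
def HasLocalDiameterTwoProperty : Prop :=
  ∀ S : Set Z, IsSlice Z S → Metric.diam S = 2

/-- The diameter 2 property. -/
def HasDiameterTwoProperty : Prop :=
  ∀ U : Set Z, U.Nonempty →
    (∃ V : Set Z, @IsOpen (WeakSpace ℝ Z) _ V ∧ U = V ∩ closedBall (0 : Z) 1) →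
    Metric.diam U = 2

/-- The strong diameter 2 property. -/
def HasStrongDiameterTwoProperty : Prop :=
  ∀ (n : ℕ), 0 < n → ∀ (S : Fin n → Set Z) (lam : Fin n → ℝ),
    (∀ i, IsSlice Z (S i)) → (∀ i, 0 ≤ lam i) → (∑ i, lam i) = 1 →
    Metric.diam {z : Z | ∃ x : Fin n → Z, (∀ i, x i ∈ S i) ∧ z = ∑ i, lam i • x i} = 2

/-- The Daugavet property. -/
def HasDaugavetProperty : Prop :=
  ∀ T : Z →L[ℝ] Z, Module.finrank ℝ (LinearMap.range (T : Z →ₗ[ℝ] Z)) = 1 →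
    ‖ContinuousLinearMap.id ℝ Z + T‖ = 1 + ‖T‖

end Props

/-- `X` is a Gurariĭ space. -/
def IsGurarii (X : Type*) [NormedAddCommGroup X] [NormedSpace ℝ X] : Prop :=
  ∀ ε : ℝ, 0 < ε →
    ∀ (F : Type) [NormedAddCommGroup F] [NormedSpace ℝ F] [FiniteDimensional ℝ F],
      ∀ (E : Subspace ℝ F) (TE : E →ₗᵢ[ℝ] X),
        ∃ TF : F →ₗ[ℝ] X,
          (∀ e : E, TF (e : F) = TE e) ∧
          (∀ f : F, (1 + ε)⁻¹ * ‖f‖ ≤ ‖TF f‖ ∧ ‖TF f‖ ≤ (1 + ε) * ‖f‖)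

/-- `X` is a Lindenstrauss space: its dual is isometric to some `L¹(μ)`. -/
def IsLindenstrauss (X : Type u) [NormedAddCommGroup X] [NormedSpace ℝ X] : Prop :=
  ∃ (α : Type u) (m : MeasurableSpace α) (μ : @MeasureTheory.Measure α m),
    Nonempty ((X →L[ℝ] ℝ) ≃ₗᵢ[ℝ] MeasureTheory.Lp ℝ 1 μ)


/-!
Along an ultrafilter finer than the directed set of pairs `(s, n)` (`s` a finite subset of `Y`),
the super-ideal maps `T : span s → X` with tolerance `1 / (n + 1)` give every `f ∈ X*` an
extension `g ∈ Y*` with `f (T y) → g y`. A relatively weakly open `V ∩ B_X` is cut out by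
conditions on the values `f x`; the same conditions on the values `g y` cut out a weakly open
`W ⊇ V` in `Y`. Two points of `W ∩ B_Y` almost `2` apart are sent by a suitable rescaled `T`
into `V ∩ B_X`, and stay almost `2` apart because `T` is almost isometric.
-/

open Filter Topology

theorem IsCompact.exists_tendsto_of_forall_mem {ι X : Type*} [TopologicalSpace X] {s : Set X}
    (hs : IsCompact s) (𝒰 : Ultrafilter ι) {u : ι → X} (hu : ∀ i, u i ∈ s) :
    ∃ x, Tendsto u 𝒰 (𝓝 x) := by
  obtain ⟨x, -, hx⟩ := hs.ultrafilter_le_nhds (𝒰.map u) <| by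
    rw [Ultrafilter.coe_map, le_principal_iff]
    exact mem_map.mpr (univ_mem' hu)
  exact ⟨x, hx⟩

theorem exists_tendsto_apply_of_eventually_linear {ι E F : Type*}
    [NormedAddCommGroup E] [NormedSpace ℝ E] [NormedAddCommGroup F] [NormedSpace ℝ F]
    (𝒰 : Ultrafilter ι) (Φ : ι → E → F) (hnorm : ∀ i y, ‖Φ i y‖ ≤ ‖y‖)
    (hadd : ∀ y z, ∀ᶠ i in 𝒰, Φ i (y + z) = Φ i y + Φ i z)
    (hsmul : ∀ (c : ℝ) y, ∀ᶠ i in 𝒰, Φ i (c • y) = c • Φ i y) (f : F →L[ℝ] ℝ) :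
    ∃ g : E →L[ℝ] ℝ, ∀ y, Tendsto (fun i => f (Φ i y)) 𝒰 (𝓝 (g y)) := by
  have hbound (y : E) (i : ι) : ‖f (Φ i y)‖ ≤ ‖f‖ * ‖y‖ :=
    (f.le_opNorm _).trans (by gcongr; exact hnorm i y)
  have hlim (y : E) : Tendsto (fun i => f (Φ i y)) 𝒰
      (𝓝 (limUnder (𝒰 : Filter ι) fun i => f (Φ i y))) :=
    tendsto_nhds_limUnder <| (isCompact_closedBall 0 (‖f‖ * ‖y‖)).exists_tendsto_of_forall_mem 𝒰
      fun i => mem_closedBall_zero_iff.mpr (hbound y i)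
  let g : E →ₗ[ℝ] ℝ :=
    { toFun := fun y => limUnder (𝒰 : Filter ι) fun i => f (Φ i y)
      map_add' := fun y z => tendsto_nhds_unique (hlim (y + z)) <|
        ((hlim y).add (hlim z)).congr' <| by
          filter_upwards [hadd y z] with i h
          simp [h]
      map_smul' := fun c y => tendsto_nhds_unique (hlim (c • y)) <|
        ((hlim y).const_mul c).congr' <| by
          filter_upwards [hsmul c y] with i h
          simp [h] }
  exact ⟨g.mkContinuous ‖f‖ fun y => le_of_tendsto' (hlim y).norm (hbound y), hlim⟩

theorem Metric.exists_lt_dist_of_lt_diam {α : Type*} [PseudoMetricSpace α] {s : Set α} {c : ℝ}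
    (hs : s.Nonempty) (h : c < diam s) : ∃ x ∈ s, ∃ y ∈ s, c < dist x y := by
  by_contra! H
  obtain ⟨x, hx⟩ := hs
  exact h.not_ge (diam_le_of_forall_dist_le (dist_nonneg.trans (H x hx x hx)) H)

theorem HasDiameterTwoProperty.of_approxRetractions {ι Y : Type*} [NormedAddCommGroup Y]
    [NormedSpace ℝ Y] {X : Subspace ℝ Y} (l : Filter ι) [l.NeBot] (Φ : ι → Y → X)
    (hnorm : ∀ i y, ‖Φ i y‖ ≤ ‖y‖)
    (hext : ∀ f : X →L[ℝ] ℝ, ∃ g : Y →L[ℝ] ℝ,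
      (∀ x : X, g x = f x) ∧ ∀ y, Tendsto (fun i => f (Φ i y)) l (𝓝 (g y)))
    (hdist : ∀ y z : Y, ∀ c < dist y z, ∀ᶠ i in l, c < dist (Φ i y) (Φ i z))
    (hY : HasDiameterTwoProperty Y) : HasDiameterTwoProperty X := by
  rintro U ⟨x₀, hx₀⟩ ⟨V, hV, rfl⟩
  choose g hg_eq hg_lim using hext
  obtain ⟨O, hO, hVO⟩ := isOpen_induced_iff.mp hV
  set W : Set Y := (fun y f => g f y) ⁻¹' O
  have hW : @IsOpen (WeakSpace ℝ Y) _ W :=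
    hO.preimage (continuous_pi fun f => WeakBilin.eval_continuous _ (g f))
  have hx₀W : (x₀ : Y) ∈ W := by
    change (fun f => g f x₀) ∈ O
    simp only [hg_eq]
    exact (hVO ▸ hx₀.1 :)
  have hWB : (W ∩ closedBall 0 1).Nonempty := ⟨x₀, hx₀W, by simpa using hx₀.2⟩
  have hΦ_mem : ∀ y ∈ W ∩ closedBall 0 1, ∀ᶠ i in l, Φ i y ∈ V ∩ closedBall 0 1 := by
    rintro y ⟨hyW, hyB⟩
    have hlim : Tendsto (fun i f => f (Φ i y)) l (𝓝 fun f => g f y) :=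
      tendsto_pi_nhds.mpr fun f => hg_lim f y
    filter_upwards [hlim (hO.mem_nhds hyW)] with i hi
    exact ⟨hVO ▸ hi, mem_closedBall_zero_iff.mpr
      ((hnorm i y).trans (mem_closedBall_zero_iff.mp hyB))⟩
  have hbdd : Bornology.IsBounded (V ∩ closedBall (0 : X) 1) :=
    isBounded_closedBall.subset inter_subset_right
  refine le_antisymm ((diam_mono inter_subset_right isBounded_closedBall).trans ?_) ?_
  · simpa using diam_closedBall (x := (0 : X)) zero_le_one
  refine le_of_forall_lt fun c hc => ?_
  obtain ⟨y₁, hy₁, y₂, hy₂, hc₁₂⟩ :=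
    exists_lt_dist_of_lt_diam hWB ((hY _ hWB ⟨W, hW, rfl⟩) ▸ hc)
  obtain ⟨i, h₁, h₂, hcΦ⟩ :=
    ((hΦ_mem y₁ hy₁).and ((hΦ_mem y₂ hy₂).and (hdist y₁ y₂ c hc₁₂))).exists
  exact hcΦ.trans_le (dist_le_diam_of_mem hbdd h₁ h₂)

theorem eventually_mem_span_atTop_prod (R : Type*) {M β : Type*} [Semiring R]
    [AddCommMonoid M] [Module R M] (l : Filter β) (y : M) :
    ∀ᶠ p in (atTop ×ˢ l : Filter (Finset M × β)), y ∈ Submodule.span R (p.1 : Set M) := by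
  have h : ∀ᶠ s in atTop, y ∈ Submodule.span R ((s : Finset M) : Set M) := by
    filter_upwards [eventually_ge_atTop {y}] with s hs
    exact Submodule.subset_span (by exact_mod_cast hs (Finset.mem_singleton_self y))
  exact h.prod_inl _

theorem tendsto_inv_one_add_one_div_add_one :
    Tendsto (fun n : ℕ => (1 + 1 / ((n : ℝ) + 1))⁻¹) atTop (𝓝 1) := by
  have h := ((tendsto_one_div_add_atTop_nhds_zero_nat (𝕜 := ℝ)).const_add 1).inv₀ (by norm_num)
  rwa [add_zero, inv_one] at h

namespace IsSuperIdeal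

variable {Y : Type*} [NormedAddCommGroup Y] [NormedSpace ℝ Y] {X : Subspace ℝ Y}
  (hX : IsSuperIdeal X)

noncomputable def localMap (p : Finset Y × ℕ) : Submodule.span ℝ (p.1 : Set Y) →ₗ[ℝ] X :=
  (hX (1 / ((p.2 : ℝ) + 1)) (by positivity) _ inferInstance).choose

theorem localMap_spec (p : Finset Y × ℕ) :
    (∀ e : Submodule.span ℝ (p.1 : Set Y), (e : Y) ∈ X → (hX.localMap p e : Y) = e) ∧
    ∀ e : Submodule.span ℝ (p.1 : Set Y),
      (1 + 1 / ((p.2 : ℝ) + 1))⁻¹ * ‖e‖ ≤ ‖hX.localMap p e‖ ∧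
      ‖hX.localMap p e‖ ≤ (1 + 1 / ((p.2 : ℝ) + 1)) * ‖e‖ :=
  (hX (1 / ((p.2 : ℝ) + 1)) (by positivity) _ inferInstance).choose_spec

open Classical in
noncomputable def approxRetraction (p : Finset Y × ℕ) (y : Y) : X :=
  if h : y ∈ Submodule.span ℝ (p.1 : Set Y) then
    (1 + 1 / ((p.2 : ℝ) + 1))⁻¹ • hX.localMap p ⟨y, h⟩
  else 0

theorem approxRetraction_of_mem {p : Finset Y × ℕ} {y : Y}
    (h : y ∈ Submodule.span ℝ (p.1 : Set Y)) :
    hX.approxRetraction p y = (1 + 1 / ((p.2 : ℝ) + 1))⁻¹ • hX.localMap p ⟨y, h⟩ :=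
  dif_pos h

theorem norm_approxRetraction_le (p : Finset Y × ℕ) (y : Y) :
    ‖hX.approxRetraction p y‖ ≤ ‖y‖ := by
  by_cases h : y ∈ Submodule.span ℝ (p.1 : Set Y)
  · have hε : 0 < 1 + 1 / ((p.2 : ℝ) + 1) := by positivity
    rw [hX.approxRetraction_of_mem h, norm_smul, norm_inv, Real.norm_of_nonneg hε.le,
      inv_mul_le_iff₀ hε]
    exact ((hX.localMap_spec p).2 ⟨y, h⟩).2
  · simp [approxRetraction, h]

theorem eventually_approxRetraction_add (y z : Y) :
    ∀ᶠ p in atTop ×ˢ atTop,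
      hX.approxRetraction p (y + z) = hX.approxRetraction p y + hX.approxRetraction p z := by
  filter_upwards [eventually_mem_span_atTop_prod ℝ atTop y,
    eventually_mem_span_atTop_prod ℝ atTop z] with p hy hz
  rw [hX.approxRetraction_of_mem hy, hX.approxRetraction_of_mem hz,
    hX.approxRetraction_of_mem (add_mem hy hz), ← smul_add, ← map_add]
  rfl

theorem eventually_approxRetraction_smul (c : ℝ) (y : Y) :
    ∀ᶠ p in atTop ×ˢ atTop, hX.approxRetraction p (c • y) = c • hX.approxRetraction p y := by
  filter_upwards [eventually_mem_span_atTop_prod ℝ atTop y] with p hy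
  rw [hX.approxRetraction_of_mem hy, hX.approxRetraction_of_mem (Submodule.smul_mem _ c hy),
    smul_comm c, ← map_smul (hX.localMap p) c]
  rfl

theorem tendsto_approxRetraction (x : X) :
    Tendsto (fun p => hX.approxRetraction p x) (atTop ×ˢ atTop) (𝓝 x) := by
  have h := (tendsto_inv_one_add_one_div_add_one.comp
    (tendsto_snd (f := (atTop : Filter (Finset Y))))).smul_const x
  rw [one_smul] at h
  refine h.congr' ?_
  filter_upwards [eventually_mem_span_atTop_prod ℝ atTop (x : Y)] with p hx
  rw [hX.approxRetraction_of_mem hx,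
    (Subtype.ext ((hX.localMap_spec p).1 ⟨x, hx⟩ x.2) : hX.localMap p ⟨x, hx⟩ = x)]
  rfl

theorem eventually_lt_dist_approxRetraction {y z : Y} {c : ℝ} (hc : c < dist y z) :
    ∀ᶠ p in atTop ×ˢ atTop, c < dist (hX.approxRetraction p y) (hX.approxRetraction p z) := by
  have hlim : Tendsto (fun p : Finset Y × ℕ => (1 + 1 / ((p.2 : ℝ) + 1))⁻¹ *
      ((1 + 1 / ((p.2 : ℝ) + 1))⁻¹ * dist y z)) (atTop ×ˢ atTop) (𝓝 (dist y z)) := by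
    have h := tendsto_inv_one_add_one_div_add_one.comp
      (tendsto_snd (f := (atTop : Filter (Finset Y))))
    simpa using h.mul (h.mul_const (dist y z))
  filter_upwards [eventually_mem_span_atTop_prod ℝ atTop y,
    eventually_mem_span_atTop_prod ℝ atTop z, hlim.eventually_const_lt hc] with p hy hz hp
  refine hp.trans_le ?_
  rw [hX.approxRetraction_of_mem hy, hX.approxRetraction_of_mem hz, dist_smul₀, norm_inv,
    Real.norm_of_nonneg (by positivity)]
  gcongr
  rw [dist_eq_norm, dist_eq_norm, ← map_sub]
  simpa only [Submodule.coe_norm, Submodule.coe_sub] using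
    ((hX.localMap_spec p).2 (⟨y, hy⟩ - ⟨z, hz⟩)).1

end IsSuperIdeal

theorem superIdeal_diameterTwoProperty_general
    (Y : Type*) [NormedAddCommGroup Y] [NormedSpace ℝ Y]
    (X : Subspace ℝ Y) (hX : IsSuperIdeal X)
    (hY : HasDiameterTwoProperty Y) :
    HasDiameterTwoProperty X := by
  let 𝒰 := Ultrafilter.of (atTop ×ˢ atTop : Filter (Finset Y × ℕ))
  have h𝒰 : (𝒰 : Filter (Finset Y × ℕ)) ≤ atTop ×ˢ atTop := Ultrafilter.of_le _
  refine HasDiameterTwoProperty.of_approxRetractions 𝒰 hX.approxRetraction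
    hX.norm_approxRetraction_le (fun f => ?_)
    (fun y z c hc => (hX.eventually_lt_dist_approxRetraction hc).filter_mono h𝒰) hY
  obtain ⟨g, hg⟩ := exists_tendsto_apply_of_eventually_linear 𝒰 hX.approxRetraction
    hX.norm_approxRetraction_le
    (fun y z => (hX.eventually_approxRetraction_add y z).filter_mono h𝒰)
    (fun c y => (hX.eventually_approxRetraction_smul c y).filter_mono h𝒰) f
  exact ⟨g, fun x => tendsto_nhds_unique (hg x)
    ((f.continuous.tendsto x).comp ((hX.tendsto_approxRetraction x).mono_left h𝒰)), hg⟩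

theorem superIdeal_diameterTwoProperty
    (Y : Type*) [NormedAddCommGroup Y] [NormedSpace ℝ Y] [CompleteSpace Y]
    (X : Subspace ℝ Y) (hXc : IsClosed (X : Set Y)) (hX : IsSuperIdeal X)
    (hY : HasDiameterTwoProperty Y) :
    HasDiameterTwoProperty X :=
  superIdeal_diameterTwoProperty_general Y X hX hY
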